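/- Assume the conditions of the interpoint-distance theorem (one of (B1)–(B4) with the corresponding growth rate of p). Under the alternative hypothesis, suppose there exist integer sequences (i*_n), (j*_n) with 1 ≤ i*_n < j*_n ≤ p such that ‖μ_{i*_n} − μ_{j*_n}‖₂²/√(n·max(log p, n)) → ∞ as n → ∞. Then for any α ∈ (0,1), lim_{n→∞} P(𝒯_n > q_{1−α}/c_n^{(2)} + b_n^{(2)}) = 1, where q_{1−α} = −log(log(1/(1−α))). -/

import Mathlib

open MeasureTheory ProbabilityTheory Filter Asymptotics Topology

noncomputable section

namespace InterpointDist

variable {Ω : Type*} [MeasurableSpace Ω]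

/-- `p̃ = p(p-1)/2`. -/
def ptilde (p : ℕ) : ℝ := (p : ℝ) * ((p : ℝ) - 1) / 2

/-- The normalizing sequence `d_{n,1}`. -/
def dn1 (p : ℕ) : ℝ :=
  Real.sqrt (2 * Real.log (ptilde p)) -
    (Real.log (Real.log (ptilde p)) + Real.log (4 * Real.pi)) /
      (2 * Real.sqrt (2 * Real.log (ptilde p)))

/-- The normalizing sequence `d_n^{(y)}`. -/
def dny (p n : ℕ) (y : ℝ) : ℝ :=
  dn1 p - y * Real.log (ptilde p) / (3 * Real.sqrt (n : ℝ))

/-- The standard Gumbel distribution function `Λ(x) = exp(-exp(-x))`. -/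
def stdGumbelCDF (x : ℝ) : ℝ := Real.exp (-Real.exp (-x))

/-- The `k`-th moment `E[X^k]` of the generic entry `X = X_{11}`. -/
def mom (μ : Measure Ω) (X : ℕ → ℕ → Ω → ℝ) (k : ℕ) : ℝ := ∫ ω, (X 0 0 ω) ^ k ∂μ

/-- The squared Euclidean interpoint distance `D_{ij}^{(2)} = ‖x_i - x_j‖₂²`, with
`x_i = (X_{i1},…,X_{in})ᵀ`. -/
def Dsq (X : ℕ → ℕ → Ω → ℝ) (n i j : ℕ) (ω : Ω) : ℝ :=
  ∑ l ∈ Finset.range n, (X i l ω - X j l ω) ^ 2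

/-- The centering sequence `b_n^{(2)} = 2n + √(2n(E[X⁴]+1))·d`. -/
def bseq (μ : Measure Ω) (X : ℕ → ℕ → Ω → ℝ) (n : ℕ) (d : ℝ) : ℝ :=
  2 * (n : ℝ) + Real.sqrt (2 * (n : ℝ) * (mom μ X 4 + 1)) * d

/-- The scaling sequence `c_n^{(2)} = d/√(2n(E[X⁴]+1))`. -/
def cseq (μ : Measure Ω) (X : ℕ → ℕ → Ω → ℝ) (n : ℕ) (d : ℝ) : ℝ :=
  d / Real.sqrt (2 * (n : ℝ) * (mom μ X 4 + 1))

/-- The constant `κ̃`. -/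
def kappaTilde (μ : Measure Ω) (X : ℕ → ℕ → Ω → ℝ) : ℝ :=
  (mom μ X 6 + 9 * mom μ X 4 - 10 * (mom μ X 3) ^ 2 - 10) /
    (Real.sqrt 2 * (mom μ X 4 + 1) ^ ((3 : ℝ) / 2))

/-- The standard conditions: `(X_{it})` iid with `E[X] = 0` and `E[X²] = 1`. -/
structure StdConditions (μ : Measure Ω) (X : ℕ → ℕ → Ω → ℝ) : Prop where
  meas : ∀ i t, Measurable (X i t)
  indep : iIndepFun (fun q : ℕ × ℕ => X q.1 q.2) μ
  ident : ∀ i t, IdentDistrib (X i t) (X 0 0) μ μ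
  intOne : Integrable (fun ω => X 0 0 ω) μ
  intSq : Integrable (fun ω => (X 0 0 ω) ^ 2) μ
  mean : (∫ ω, X 0 0 ω ∂μ) = 0
  var : (∫ ω, (X 0 0 ω) ^ 2 ∂μ) = 1

/-- Condition (B1) together with the growth rate `p = O(n^{(s-2)/4})`. -/
def CondB1 (μ : Measure Ω) (X : ℕ → ℕ → Ω → ℝ) (p : ℕ → ℕ) (s : ℝ) : Prop :=
  2 < s ∧
  Integrable (fun ω => |X 0 0 ω| ^ (2 * s) * (Real.log |X 0 0 ω|) ^ (s / 2)) μ ∧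
  mom μ X 4 ≤ 5 ∧
  (fun n => (p n : ℝ)) =O[atTop] fun n => (n : ℝ) ^ ((s - 2) / 4)

/-- Condition (B2) together with the growth rate `p = exp(o(n^{r/(2-r)}))`. -/
def CondB2 (μ : Measure Ω) (X : ℕ → ℕ → Ω → ℝ) (p : ℕ → ℕ) (η r : ℝ) : Prop :=
  0 < η ∧ 0 < r ∧ r ≤ 2 / 3 ∧
  Integrable (fun ω => Real.exp (η * |X 0 0 ω| ^ (2 * r))) μ ∧
  mom μ X 4 < 5 ∧
  (fun n => Real.log (p n)) =o[atTop] fun n => (n : ℝ) ^ (r / (2 - r))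

/-- Condition (B3) together with the growth rate `p = exp(o(n^{1/(3+2/r)}))`. -/
def CondB3 (μ : Measure Ω) (X : ℕ → ℕ → Ω → ℝ) (p : ℕ → ℕ) (η r : ℝ) : Prop :=
  0 < η ∧ 1 / 2 ≤ r ∧
  Integrable (fun ω => Real.exp (η * |X 0 0 ω| ^ (2 * r))) μ ∧
  mom μ X 4 = 5 ∧
  (fun n => Real.log (p n)) =o[atTop] fun n => (n : ℝ) ^ (1 / (3 + 2 / r))

/-- Condition (B4) together with the growth rate `p = exp(o(n^{1/3}))`. -/
def CondB4 (μ : Measure Ω) (X : ℕ → ℕ → Ω → ℝ) (p : ℕ → ℕ) (K : ℝ) : Prop :=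
  (∀ᵐ ω ∂μ, |X 0 0 ω| < K) ∧
  mom μ X 4 = 5 ∧
  (fun n => Real.log (p n)) =o[atTop] fun n => (n : ℝ) ^ ((1 : ℝ) / 3)

/-- The test statistic `𝒯_n = max_{1≤i<j≤p} ‖x̃_i - x̃_j‖₂²`, where `x̃_i = x_i + μ_i` and
`μvec n i` is the mean vector `μ_i ∈ ℝⁿ` of the `i`-th observation. -/
def testStat (X : ℕ → ℕ → Ω → ℝ) (μvec : ℕ → ℕ → ℕ → ℝ) (p n : ℕ) (ω : Ω) : ℝ :=
  ⨆ q : {q : ℕ × ℕ // q.1 < q.2 ∧ q.2 < p},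
    ∑ l ∈ Finset.range n,
      ((X q.1.1 l ω + μvec n q.1.1 l) - (X q.1.2 l ω + μvec n q.1.2 l)) ^ 2

/-- The `(1-α)`-quantile `q_{1-α} = -log(log(1/(1-α)))` of the standard Gumbel law. -/
def gumbelQuantile (α : ℝ) : ℝ := -Real.log (Real.log (1 / (1 - α)))

/-- The test is consistent against the alternative:
`P(𝒯_n > q_{1-α}/c_n^{(2)} + b_n^{(2)}) → 1`. -/
def TestPowerOne (μ : Measure Ω) (X : ℕ → ℕ → Ω → ℝ) (μvec : ℕ → ℕ → ℕ → ℝ)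
    (p : ℕ → ℕ) (d : ℕ → ℝ) : Prop :=
  ∀ α : ℝ, α ∈ Set.Ioo (0 : ℝ) 1 →
    Tendsto (fun n =>
      (μ {ω | gumbelQuantile α / cseq μ X n (d n) + bseq μ X n (d n) <
          testStat X μvec (p n) n ω}).toReal)
      atTop (𝓝 1)


variable {μ : Measure Ω} [IsProbabilityMeasure μ] {X : ℕ → ℕ → Ω → ℝ}

lemma variance_le_integral_sub_sq {W : Ω → ℝ} (hW : MemLp W 2 μ) (c : ℝ) :
    variance W μ ≤ ∫ ω, (W ω - c)^2 ∂μ := by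
  have hint : Integrable W μ := hW.integrable one_le_two
  have hsq : Integrable (fun ω => W ω ^ 2) μ := hW.integrable_sq
  have h1 : Integrable (fun ω => -(2*c) * W ω + c^2) μ :=
    (hint.const_mul _).add (integrable_const _)
  have h2 : Integrable (fun ω => -(2*c) * W ω) μ := hint.const_mul _
  have hexp : ∫ ω, (W ω - c)^2 ∂μ = (∫ ω, W ω ^2 ∂μ) - 2*c*(∫ ω, W ω ∂μ) + c^2 := by
    have heq : (fun ω => (W ω - c)^2) = fun ω => W ω^2 + (-(2*c) * W ω + c^2) := by
      funext ω; ring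
    rw [heq, integral_add hsq h1, integral_add h2 (integrable_const _), integral_const_mul,
      integral_const]
    simp; ring
  rw [hexp, variance_eq_sub hW]
  simp only [Pi.pow_apply]
  nlinarith [sq_nonneg ((∫ ω, W ω ∂μ) - c)]

lemma moments (hstd : StdConditions μ X) (hInt4 : Integrable (fun ω => (X 0 0 ω)^4) μ)
    (i l : ℕ) :
    Integrable (X i l) μ ∧ Integrable (fun ω => (X i l ω)^2) μ ∧
      Integrable (fun ω => (X i l ω)^4) μ ∧
      ∫ ω, X i l ω ∂μ = 0 ∧ ∫ ω, (X i l ω)^2 ∂μ = 1 ∧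
      ∫ ω, (X i l ω)^4 ∂μ = mom μ X 4 := by
  have h := hstd.ident i l
  have h2 := h.comp (measurable_id.pow_const 2 : Measurable fun x : ℝ => x ^ 2)
  have h4 := h.comp (measurable_id.pow_const 4 : Measurable fun x : ℝ => x ^ 4)
  simp only [Function.comp_def, id] at h2 h4
  refine ⟨h.integrable_iff.2 hstd.intOne, h2.integrable_iff.2 hstd.intSq,
    h4.integrable_iff.2 hInt4, ?_, ?_, ?_⟩
  · rw [h.integral_eq, hstd.mean]
  · rw [h2.integral_eq, hstd.var]
  · rw [h4.integral_eq]; rfl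

set_option linter.unusedSectionVars false

lemma pair_stats (hstd : StdConditions μ X)
    (hInt4 : Integrable (fun ω => (X 0 0 ω)^4) μ) (hm4 : mom μ X 4 ≤ 5)
    (i j : ℕ) (hij : i ≠ j) (δ : ℕ → ℝ) (n : ℕ) :
    MemLp (fun ω => ∑ l ∈ Finset.range n, (X i l ω - X j l ω + δ l)^2) 2 μ ∧
    (∑ l ∈ Finset.range n, (δ l)^2) ≤
      ∫ ω, ∑ l ∈ Finset.range n, (X i l ω - X j l ω + δ l)^2 ∂μ ∧
    variance (fun ω => ∑ l ∈ Finset.range n, (X i l ω - X j l ω + δ l)^2) μ ≤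
      336 * n + 32 * ∑ l ∈ Finset.range n, (δ l)^2 := by
  have hmom := fun (a b : ℕ) => moments hstd hInt4 a b
  set W : ℕ → Ω → ℝ := fun l ω => (X i l ω - X j l ω + δ l)^2 with hW
  have hfun : (fun ω => ∑ l ∈ Finset.range n, (X i l ω - X j l ω + δ l)^2) =
      ∑ l ∈ Finset.range n, W l := by
    funext ω; simp [hW]
  have measW : ∀ l, Measurable (W l) := fun l =>
    (((hstd.meas i l).sub (hstd.meas j l)).add_const _).pow_const 2
  have key4 : ∀ a b : ℝ, (a - b)^4 ≤ 8*a^4 + 8*b^4 := by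
    intro a b
    nlinarith [sq_nonneg (a+b), sq_nonneg (a-b), sq_nonneg (a^2-b^2), sq_nonneg (a^2+b^2),
      sq_nonneg (a*b), sq_nonneg ((a-b)^2)]
  have key2 : ∀ a b : ℝ, (a - b)^2 ≤ 2*a^2 + 2*b^2 := by
    intro a b; nlinarith [sq_nonneg (a+b)]
  have hz4 : ∀ l, Integrable (fun ω => (X i l ω - X j l ω)^4) μ := by
    intro l
    have hb : Integrable (fun ω => 8 * (X i l ω)^4 + 8 * (X j l ω)^4) μ := by
      exact (((hmom i l).2.2.1).const_mul 8).add (((hmom j l).2.2.1).const_mul 8)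
    refine hb.mono' ((((hstd.meas i l).sub (hstd.meas j l)).pow_const 4)).aestronglyMeasurable
      (Filter.Eventually.of_forall fun ω => ?_)
    rw [Real.norm_eq_abs, abs_of_nonneg (by positivity)]
    exact key4 _ _
  have hz2 : ∀ l, Integrable (fun ω => (X i l ω - X j l ω)^2) μ := by
    intro l
    have hb : Integrable (fun ω => 2 * (X i l ω)^2 + 2 * (X j l ω)^2) μ := by
      exact (((hmom i l).2.1).const_mul 2).add (((hmom j l).2.1).const_mul 2)
    refine hb.mono' ((((hstd.meas i l).sub (hstd.meas j l)).pow_const 2)).aestronglyMeasurable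
      (Filter.Eventually.of_forall fun ω => ?_)
    rw [Real.norm_eq_abs, abs_of_nonneg (by positivity)]
    exact key2 _ _
  have hz : ∀ l, Integrable (fun ω => X i l ω - X j l ω) μ := fun l =>
    ((hmom i l).1).sub ((hmom j l).1)
  have hzint : ∀ l, ∫ ω, (X i l ω - X j l ω) ∂μ = 0 := by
    intro l
    rw [integral_sub ((hmom i l).1) ((hmom j l).1), (hmom i l).2.2.2.1, (hmom j l).2.2.2.1]
    ring
  have hz2le : ∀ l, ∫ ω, (X i l ω - X j l ω)^2 ∂μ ≤ 4 := by
    intro l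
    have hb : Integrable (fun ω => 2 * (X i l ω)^2 + 2 * (X j l ω)^2) μ := by
      exact (((hmom i l).2.1).const_mul 2).add (((hmom j l).2.1).const_mul 2)
    have hmono := integral_mono (hz2 l) hb (fun ω => key2 _ _)
    have hsplit : ∫ ω, (2 * (X i l ω)^2 + 2 * (X j l ω)^2) ∂μ
        = 2 * (∫ ω, (X i l ω)^2 ∂μ) + 2 * ∫ ω, (X j l ω)^2 ∂μ := by
      rw [integral_add (by exact ((hmom i l).2.1).const_mul 2)
        (by exact ((hmom j l).2.1).const_mul 2), integral_const_mul, integral_const_mul]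
    rw [hsplit, (hmom i l).2.2.2.2.1, (hmom j l).2.2.2.2.1] at hmono
    linarith
  have hz4le : ∀ l, ∫ ω, (X i l ω - X j l ω)^4 ∂μ ≤ 80 := by
    intro l
    have hb : Integrable (fun ω => 8 * (X i l ω)^4 + 8 * (X j l ω)^4) μ := by
      exact (((hmom i l).2.2.1).const_mul 8).add (((hmom j l).2.2.1).const_mul 8)
    have hmono := integral_mono (hz4 l) hb (fun ω => key4 _ _)
    have hsplit : ∫ ω, (8 * (X i l ω)^4 + 8 * (X j l ω)^4) ∂μ
        = 8 * (∫ ω, (X i l ω)^4 ∂μ) + 8 * ∫ ω, (X j l ω)^4 ∂μ := by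
      rw [integral_add (by exact ((hmom i l).2.2.1).const_mul 8)
        (by exact ((hmom j l).2.2.1).const_mul 8), integral_const_mul, integral_const_mul]
    rw [hsplit, (hmom i l).2.2.2.2.2, (hmom j l).2.2.2.2.2] at hmono
    linarith
  have intW2 : ∀ l, Integrable (fun ω => (W l ω)^2) μ := by
    intro l
    have hb : Integrable (fun ω => 8 * (X i l ω - X j l ω)^4 + 8 * (δ l)^4) μ := by
      exact ((hz4 l).const_mul 8).add (integrable_const _)
    refine hb.mono' (((measW l).pow_const 2)).aestronglyMeasurable
      (Filter.Eventually.of_forall fun ω => ?_)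
    rw [Real.norm_eq_abs, abs_of_nonneg (by positivity)]
    have := key4 (X i l ω - X j l ω) (-(δ l))
    calc (W l ω)^2 = ((X i l ω - X j l ω) - (-(δ l)))^4 := by simp only [hW]; ring
      _ ≤ 8*(X i l ω - X j l ω)^4 + 8*(-(δ l))^4 := key4 _ _
      _ = 8*(X i l ω - X j l ω)^4 + 8*(δ l)^4 := by ring
  have memW : ∀ l, MemLp (W l) 2 μ := fun l =>
    (memLp_two_iff_integrable_sq (measW l).aestronglyMeasurable).2 (intW2 l)
  have intW : ∀ l, Integrable (W l) μ := fun l => (memW l).integrable one_le_two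
  have hEW : ∀ l, (δ l)^2 ≤ ∫ ω, W l ω ∂μ := by
    intro l
    have heq : (fun ω => W l ω) =
        fun ω => (X i l ω - X j l ω)^2 + (2 * δ l * (X i l ω - X j l ω) + (δ l)^2) := by
      funext ω; simp only [hW]; ring
    have h1 : Integrable (fun ω => 2 * δ l * (X i l ω - X j l ω) + (δ l)^2) μ := by
      exact ((hz l).const_mul _).add (integrable_const _)
    have h2 : Integrable (fun ω => 2 * δ l * (X i l ω - X j l ω)) μ := by
      exact (hz l).const_mul _
    have hsplit : ∫ ω, W l ω ∂μ = (∫ ω, (X i l ω - X j l ω)^2 ∂μ)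
        + (2 * δ l * (∫ ω, (X i l ω - X j l ω) ∂μ) + (δ l)^2) := by
      rw [heq, integral_add (hz2 l) h1, integral_add h2 (integrable_const _),
        integral_const_mul, integral_const]
      simp
    rw [hsplit, hzint l]
    have := integral_nonneg (μ := μ) (f := fun ω => (X i l ω - X j l ω)^2) (fun ω => sq_nonneg (X i l ω - X j l ω))
    nlinarith [this]
  have hVarW : ∀ l, variance (W l) μ ≤ 336 + 32 * (δ l)^2 := by
    intro l
    refine le_trans (variance_le_integral_sub_sq (memW l) ((δ l)^2 + 2)) ?_
    have hWc2 : Integrable (fun ω => (W l ω - ((δ l)^2 + 2))^2) μ := by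
      exact ((memW l).sub (memLp_const _)).integrable_sq
    have hb4 : Integrable (fun ω => 4 * (X i l ω - X j l ω)^4 + 16) μ := by
      exact ((hz4 l).const_mul 4).add (integrable_const _)
    have hb2 : Integrable (fun ω => 8 * (δ l)^2 * (X i l ω - X j l ω)^2) μ := by
      exact (hz2 l).const_mul _
    have hb : Integrable (fun ω => (4 * (X i l ω - X j l ω)^4 + 16) +
        8 * (δ l)^2 * (X i l ω - X j l ω)^2) μ := by exact hb4.add hb2
    have hmono := integral_mono hWc2 hb (fun ω => by
      simp only [hW]
      nlinarith [sq_nonneg ((X i l ω - X j l ω)^2 - 2), sq_nonneg (X i l ω - X j l ω),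
        sq_nonneg ((X i l ω - X j l ω)^2 - 2 + 2 * δ l * (X i l ω - X j l ω)),
        sq_nonneg ((X i l ω - X j l ω)^2 - 2 - 2 * δ l * (X i l ω - X j l ω)),
        sq_nonneg (δ l * (X i l ω - X j l ω))])
    have hsplit : ∫ ω, ((4 * (X i l ω - X j l ω)^4 + 16) +
        8 * (δ l)^2 * (X i l ω - X j l ω)^2) ∂μ
        = (4 * (∫ ω, (X i l ω - X j l ω)^4 ∂μ) + 16)
          + 8 * (δ l)^2 * ∫ ω, (X i l ω - X j l ω)^2 ∂μ := by
      rw [integral_add hb4 hb2, integral_add (by exact (hz4 l).const_mul 4) (integrable_const _),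
        integral_const_mul, integral_const_mul, integral_const]
      simp
    rw [hsplit] at hmono
    nlinarith [hz4le l, hz2le l, sq_nonneg (δ l)]
  have hindep : Set.Pairwise ↑(Finset.range n) fun l m => IndepFun (W l) (W m) μ := by
    intro l _ m _ hlm
    have hpair := hstd.indep.indepFun_prodMk_prodMk (fun q => hstd.meas q.1 q.2)
      (i, l) (j, l) (i, m) (j, m)
      (fun h => hlm (congrArg Prod.snd h))
      (fun h => hij (congrArg Prod.fst h))
      (fun h => hij ((congrArg Prod.fst h).symm))
      (fun h => hlm (congrArg Prod.snd h))
    have hφ : ∀ c : ℝ, Measurable (fun v : ℝ × ℝ => (v.1 - v.2 + c)^2) := fun c =>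
      ((measurable_fst.sub measurable_snd).add_const _).pow_const 2
    exact hpair.comp (hφ (δ l)) (hφ (δ m))
  rw [hfun]
  refine ⟨memLp_finset_sum' _ (fun l _ => memW l), ?_, ?_⟩
  · have : ∫ ω, (∑ l ∈ Finset.range n, W l) ω ∂μ = ∑ l ∈ Finset.range n, ∫ ω, W l ω ∂μ := by
      simp only [Finset.sum_apply]
      exact integral_finset_sum _ (fun l _ => intW l)
    rw [this]
    exact Finset.sum_le_sum fun l _ => hEW l
  · rw [IndepFun.variance_sum (fun l _ => memW l) hindep]
    calc ∑ l ∈ Finset.range n, variance (W l) μ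
        ≤ ∑ l ∈ Finset.range n, (336 + 32 * (δ l)^2) := Finset.sum_le_sum fun l _ => hVarW l
      _ = 336 * n + 32 * ∑ l ∈ Finset.range n, (δ l)^2 := by
          rw [Finset.sum_add_distrib, Finset.sum_const, ← Finset.mul_sum]
          simp [mul_comm]

set_option maxHeartbeats 1000000 in
lemma master (hstd : StdConditions μ X)
    (hInt4 : Integrable (fun ω => (X 0 0 ω)^4) μ) (hm4 : mom μ X 4 ≤ 5)
    (μvec : ℕ → ℕ → ℕ → ℝ) (p : ℕ → ℕ)
    (istar jstar : ℕ → ℕ) (hlt : ∀ n, istar n < jstar n ∧ jstar n < p n)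
    (hsep : Tendsto (fun n =>
        (∑ l ∈ Finset.range n, (μvec n (istar n) l - μvec n (jstar n) l) ^ 2) /
          Real.sqrt ((n : ℝ) * max (Real.log (p n)) (n : ℝ)))
      atTop atTop)
    (d : ℕ → ℝ) (hd : Tendsto d atTop atTop)
    (hdle : ∀ᶠ n in atTop, d n ≤ 3 * Real.sqrt (max (Real.log (p n)) (n:ℝ))) :
    TestPowerOne μ X μvec p d := by
  intro α hα
  have m4nn : (0:ℝ) ≤ mom μ X 4 := integral_nonneg fun ω => by positivity
  set q : ℝ := gumbelQuantile α with hqdef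
  set δ : ℕ → ℕ → ℝ := fun n l => μvec n (istar n) l - μvec n (jstar n) l with hδ
  set R : ℕ → ℝ := fun n => ∑ l ∈ Finset.range n, (δ n l)^2 with hRdef
  set M : ℕ → ℝ := fun n => Real.sqrt ((n : ℝ) * max (Real.log (p n)) (n : ℝ)) with hMdef
  set S : ℕ → ℝ := fun n => R n / M n with hSdef
  have hsepS : Tendsto S atTop atTop := hsep
  set Y : ℕ → Ω → ℝ := fun n ω =>
    ∑ l ∈ Finset.range n, (X (istar n) l ω - X (jstar n) l ω + δ n l)^2 with hYdef
  set t : ℕ → ℝ := fun n => gumbelQuantile α / cseq μ X n (d n) + bseq μ X n (d n) with htdef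
  have hstats := fun n => pair_stats hstd hInt4 hm4 (istar n) (jstar n)
    (ne_of_lt (hlt n).1) (δ n) n
  have measY : ∀ n, Measurable (Y n) := by
    intro n
    apply Finset.measurable_sum
    intro l _
    exact (((hstd.meas _ l).sub (hstd.meas _ l)).add_const _).pow_const 2
  set B : ℕ → ℝ := fun n => (μ {ω | Y n ω ≤ t n}).toReal with hBdef
  have hB0 : ∀ n, 0 ≤ B n := fun n => ENNReal.toReal_nonneg
  -- Y is below the test statistic
  have hYle : ∀ n ω, Y n ω ≤ testStat X μvec (p n) n ω := by
    intro n ω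
    have hfin : Finite {q : ℕ × ℕ // q.1 < q.2 ∧ q.2 < p n} := by
      refine Finite.of_injective (fun x =>
        ((⟨x.1.1, lt_trans x.2.1 x.2.2⟩ : Fin (p n)), (⟨x.1.2, x.2.2⟩ : Fin (p n)))) ?_
      intro a b hab
      simp only [Prod.mk.injEq, Fin.mk.injEq] at hab
      exact Subtype.ext (Prod.ext hab.1 hab.2)
    have hbdd : BddAbove (Set.range fun qq : {q : ℕ × ℕ // q.1 < q.2 ∧ q.2 < p n} =>
        ∑ l ∈ Finset.range n,
          ((X qq.1.1 l ω + μvec n qq.1.1 l) - (X qq.1.2 l ω + μvec n qq.1.2 l))^2) :=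
      (Set.finite_range _).bddAbove
    have hle := le_ciSup hbdd ⟨(istar n, jstar n), hlt n⟩
    refine le_trans (le_of_eq ?_) hle
    refine Finset.sum_congr rfl fun l _ => ?_
    simp only [hδ]
    ring
  -- lower bound on the rejection probability
  have hlow : ∀ n, 1 - B n ≤
      (μ {ω | t n < testStat X μvec (p n) n ω}).toReal := by
    intro n
    have hmeas : MeasurableSet {ω | Y n ω ≤ t n} :=
      measurableSet_le (measY n) measurable_const
    have hcompl : {ω | Y n ω ≤ t n}ᶜ ⊆ {ω | t n < testStat X μvec (p n) n ω} := by
      intro ω hω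
      simp only [Set.mem_compl_iff, Set.mem_setOf_eq, not_le] at hω
      exact lt_of_lt_of_le hω (hYle n ω)
    have h1 : μ {ω | Y n ω ≤ t n}ᶜ = 1 - μ {ω | Y n ω ≤ t n} := by
      rw [measure_compl hmeas (measure_ne_top μ _), measure_univ]
    have h2 : (μ {ω | Y n ω ≤ t n}ᶜ).toReal = 1 - B n := by
      rw [h1, ENNReal.toReal_sub_of_le prob_le_one ENNReal.one_ne_top, ENNReal.toReal_one]
    rw [← h2]
    exact ENNReal.toReal_mono (measure_ne_top μ _) (measure_mono hcompl)
  have hup : ∀ n, (μ {ω | t n < testStat X μvec (p n) n ω}).toReal ≤ 1 := by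
    intro n
    rw [← ENNReal.toReal_one]
    exact ENNReal.toReal_mono ENNReal.one_ne_top prob_le_one
  -- the key eventual bound on B
  have hev : ∀ᶠ n : ℕ in atTop, B n ≤ 1472 / S n := by
    have h1 : ∀ᶠ n : ℕ in atTop, (1:ℝ) ≤ (n:ℝ) := by
      filter_upwards [Filter.eventually_ge_atTop 1] with n hn
      exact_mod_cast hn
    have h2 : ∀ᶠ n : ℕ in atTop, max 1 |q| ≤ d n := hd.eventually_ge_atTop _
    have h4 : ∀ᶠ n : ℕ in atTop, 36 ≤ S n := hsepS.eventually_ge_atTop _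
    filter_upwards [h1, h2, hdle, h4] with n hn1 hqd hd3 hS36
    set m : ℝ := max (Real.log (p n)) (n:ℝ) with hmdef
    have hnm : (n:ℝ) ≤ m := le_max_right _ _
    have hm1 : (1:ℝ) ≤ m := le_trans hn1 hnm
    have hn0 : (0:ℝ) ≤ (n:ℝ) := by linarith
    have hMn : (n:ℝ) ≤ M n := by
      have : (n:ℝ) = Real.sqrt ((n:ℝ) * (n:ℝ)) := by
        rw [Real.sqrt_mul_self hn0]
      rw [hMdef, this]
      exact Real.sqrt_le_sqrt (by nlinarith)
    have hM1 : (1:ℝ) ≤ M n := le_trans hn1 hMn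
    have hM0 : (0:ℝ) < M n := by linarith
    have hsqnM : Real.sqrt (n:ℝ) ≤ M n := by
      rw [hMdef]
      exact Real.sqrt_le_sqrt (by nlinarith)
    have hsqmul : Real.sqrt (n:ℝ) * Real.sqrt m = M n := by
      rw [hMdef, ← Real.sqrt_mul hn0]
    have hRM : R n = S n * M n := by
      rw [hSdef]
      field_simp
    have hS0 : (0:ℝ) < S n := by linarith
    have hR36 : 36 * M n ≤ R n := by
      rw [hRM]
      nlinarith
    have hR1 : (1:ℝ) ≤ R n := by nlinarith
    have hR0 : (0:ℝ) < R n := by linarith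
    -- the threshold bound
    set s : ℝ := Real.sqrt (2 * (n:ℝ) * (mom μ X 4 + 1)) with hsdef
    have hs0 : (0:ℝ) ≤ s := Real.sqrt_nonneg _
    have hs4 : s ≤ 4 * Real.sqrt (n:ℝ) := by
      have h16 : Real.sqrt (16 * (n:ℝ)) = 4 * Real.sqrt (n:ℝ) := by
        rw [show (16:ℝ) * (n:ℝ) = 4^2 * (n:ℝ) by norm_num, Real.sqrt_mul (by positivity),
          Real.sqrt_sq (by norm_num)]
      rw [hsdef, ← h16]
      exact Real.sqrt_le_sqrt (by nlinarith)
    have hd1 : (1:ℝ) ≤ d n := le_trans (le_max_left _ _) hqd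
    have hd0 : (0:ℝ) < d n := by linarith
    have hqd' : |q| ≤ d n := le_trans (le_max_right _ _) hqd
    have hteq : t n = q * s / d n + (2 * (n:ℝ) + s * d n) := by
      rw [htdef]
      simp only [cseq, bseq, ← hsdef, ← hqdef, div_div_eq_mul_div]
    have hq_term : q * s / d n ≤ s := by
      rw [div_le_iff₀ hd0]
      nlinarith [le_abs_self q]
    have hsd : s * d n ≤ 12 * M n := by
      calc s * d n ≤ (4 * Real.sqrt (n:ℝ)) * (3 * Real.sqrt m) :=
            mul_le_mul hs4 hd3 (le_of_lt hd0) (by positivity)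
        _ = 12 * (Real.sqrt (n:ℝ) * Real.sqrt m) := by ring
        _ = 12 * M n := by rw [hsqmul]
    have hts : t n ≤ 18 * M n := by
      rw [hteq]
      have h4M : s ≤ 4 * M n := by nlinarith [Real.sqrt_nonneg (n:ℝ)]
      linarith [hq_term, h4M, hsd, hMn]
    -- Chebyshev
    obtain ⟨hmem, hEY, hVar⟩ := hstats n
    have hVar0 : (0:ℝ) ≤ variance (Y n) μ := variance_nonneg _ _
    set g : ℝ := (∫ ω, Y n ω ∂μ) - t n with hgdef
    have hgR : R n / 2 ≤ g := by
      have : R n ≤ ∫ ω, Y n ω ∂μ := hEY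
      have h18 : t n ≤ R n / 2 := by nlinarith
      linarith
    have hg0 : (0:ℝ) < g := by linarith
    have hcheb := meas_ge_le_variance_div_sq (μ := μ) hmem hg0
    have hsub : {ω | Y n ω ≤ t n} ⊆ {ω | g ≤ |Y n ω - μ[Y n]|} := by
      intro ω hω
      simp only [Set.mem_setOf_eq] at hω ⊢
      have : μ[Y n] = ∫ ω, Y n ω ∂μ := rfl
      rw [abs_sub_comm]
      calc g ≤ μ[Y n] - Y n ω := by rw [this]; linarith
        _ ≤ |μ[Y n] - Y n ω| := le_abs_self _
    have hBn : B n ≤ variance (Y n) μ / g^2 := by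
      rw [hBdef]
      calc (μ {ω | Y n ω ≤ t n}).toReal
          ≤ (μ {ω | g ≤ |Y n ω - μ[Y n]|}).toReal :=
            ENNReal.toReal_mono (measure_ne_top μ _) (measure_mono hsub)
        _ ≤ (ENNReal.ofReal (variance (Y n) μ / g^2)).toReal :=
            ENNReal.toReal_mono ENNReal.ofReal_ne_top hcheb
        _ = variance (Y n) μ / g^2 := ENNReal.toReal_ofReal (by positivity)
    have hfinal : variance (Y n) μ / g^2 ≤ 1472 / S n := by
      have hg2 : (R n / 2)^2 ≤ g^2 := by nlinarith
      have hstep1 : variance (Y n) μ / g^2 ≤ variance (Y n) μ / (R n / 2)^2 := by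
        apply div_le_div_of_nonneg_left hVar0 (by positivity) hg2
      have hstep2 : variance (Y n) μ / (R n / 2)^2 ≤ (336 * n + 32 * R n) / (R n / 2)^2 := by
        apply div_le_div_of_nonneg_right ?_ (by positivity)
        · exact hVar
      have hSR : S n ≤ R n := by
        rw [hSdef]
        exact div_le_self (le_of_lt hR0) hM1
      have hSn : S n * (n:ℝ) ≤ R n := by
        rw [hRM]; nlinarith
      have hstep3 : (336 * (n:ℝ) + 32 * R n) / (R n / 2)^2 ≤ 1472 / S n := by
        rw [div_le_div_iff₀ (by positivity) hS0]
        nlinarith [mul_le_mul_of_nonneg_left hSR (by positivity : (0:ℝ) ≤ 128 * R n),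
          mul_le_mul_of_nonneg_left hSn (by norm_num : (0:ℝ) ≤ 1344), sq_nonneg (R n)]
      calc variance (Y n) μ / g^2 ≤ variance (Y n) μ / (R n / 2)^2 := hstep1
        _ ≤ (336 * n + 32 * R n) / (R n / 2)^2 := hstep2
        _ ≤ 1472 / S n := hstep3
    linarith
  -- conclude
  have hBto : Tendsto B atTop (𝓝 0) := by
    have hq0 : Tendsto (fun n => 1472 / S n) atTop (𝓝 0) :=
      Tendsto.div_atTop tendsto_const_nhds hsepS
    exact tendsto_of_tendsto_of_tendsto_of_le_of_le' tendsto_const_nhds hq0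
      (Filter.Eventually.of_forall hB0) hev
  have h1B : Tendsto (fun n => 1 - B n) atTop (𝓝 1) := by
    have := (tendsto_const_nhds (x := (1:ℝ)) (f := atTop)).sub hBto
    simpa using this
  exact tendsto_of_tendsto_of_tendsto_of_le_of_le' h1B tendsto_const_nhds
    (Filter.Eventually.of_forall hlow) (Filter.Eventually.of_forall hup)

lemma sqrt_tendsto_atTop : Tendsto Real.sqrt atTop atTop := by
  rw [show Real.sqrt = fun x : ℝ => x ^ ((1:ℝ)/2) from funext fun x => Real.sqrt_eq_rpow x]
  exact tendsto_rpow_atTop (by norm_num)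

/-- Integrability of the fourth moment under (B1)-style moment condition. -/
lemma int4_of_B1 (hmeas : Measurable (X 0 0)) {s : ℝ} (hs : 2 < s)
    (hint : Integrable (fun ω => |X 0 0 ω| ^ (2 * s) * (Real.log |X 0 0 ω|) ^ (s / 2)) μ) :
    Integrable (fun ω => (X 0 0 ω)^4) μ := by
  have hb : Integrable (fun ω => Real.exp 1 ^ 4 +
      max (|X 0 0 ω| ^ (2 * s) * (Real.log |X 0 0 ω|) ^ (s / 2)) 0) μ :=
    (integrable_const _).add hint.pos_part
  refine hb.mono' ((hmeas.pow_const 4)).aestronglyMeasurable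
    (Filter.Eventually.of_forall fun ω => ?_)
  rw [Real.norm_eq_abs, abs_of_nonneg (by positivity)]
  set x : ℝ := X 0 0 ω with hx
  rcases le_or_gt |x| (Real.exp 1) with h | h
  · have h1 : x^4 ≤ Real.exp 1 ^ 4 := by
      calc x^4 = |x|^4 := by rw [← abs_pow]; exact (abs_of_nonneg (by positivity)).symm
        _ ≤ Real.exp 1 ^ 4 := pow_le_pow_left₀ (abs_nonneg x) h 4
    have h2 : (0:ℝ) ≤ max (|x| ^ (2 * s) * (Real.log |x|) ^ (s / 2)) 0 := le_max_right _ _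
    linarith
  · have hx1 : (1:ℝ) ≤ |x| := le_trans (by nlinarith [Real.exp_one_gt_d9]) h.le
    have hlog : (1:ℝ) ≤ Real.log |x| := by
      rw [Real.le_log_iff_exp_le (by positivity)]
      exact h.le
    have h4 : x^4 ≤ |x| ^ (2 * s) := by
      calc x^4 = |x| ^ ((4:ℕ):ℝ) := by
            rw [Real.rpow_natCast, ← abs_pow]; exact (abs_of_nonneg (by positivity)).symm
        _ ≤ |x| ^ (2 * s) := Real.rpow_le_rpow_of_exponent_le hx1 (by push_cast; linarith)
    have h5 : |x| ^ (2 * s) ≤ |x| ^ (2 * s) * (Real.log |x|) ^ (s / 2) := by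
      nlinarith [Real.one_le_rpow hlog (by linarith : (0:ℝ) ≤ s / 2),
        Real.rpow_nonneg (abs_nonneg x) (2 * s)]
    have h6 : |x| ^ (2 * s) * (Real.log |x|) ^ (s / 2) ≤
        max (|x| ^ (2 * s) * (Real.log |x|) ^ (s / 2)) 0 := le_max_left _ _
    nlinarith [pow_nonneg (Real.exp_pos 1).le 4]

/-- Integrability of the fourth moment under an exponential-moment condition. -/
lemma int4_of_exp (hmeas : Measurable (X 0 0)) {η r : ℝ} (hη : 0 < η) (hr : 0 < r)
    (hint : Integrable (fun ω => Real.exp (η * |X 0 0 ω| ^ (2 * r))) μ) :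
    Integrable (fun ω => (X 0 0 ω)^4) μ := by
  set k : ℕ := ⌈(2:ℝ)/r⌉₊ with hk
  have hkr : (2:ℝ)/r ≤ k := Nat.le_ceil _
  have hC : (0:ℝ) < (k.factorial : ℝ) / η ^ k := by positivity
  have hb : Integrable (fun ω => 1 + ((k.factorial : ℝ) / η ^ k) *
      Real.exp (η * |X 0 0 ω| ^ (2 * r))) μ :=
    (integrable_const _).add (hint.const_mul _)
  refine hb.mono' ((hmeas.pow_const 4)).aestronglyMeasurable
    (Filter.Eventually.of_forall fun ω => ?_)
  rw [Real.norm_eq_abs, abs_of_nonneg (by positivity)]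
  set x : ℝ := X 0 0 ω with hx
  have hexp0 : (0:ℝ) ≤ Real.exp (η * |x| ^ (2 * r)) := (Real.exp_pos _).le
  rcases le_or_gt |x| 1 with h | h
  · have h1 : x^4 ≤ 1 := by
      calc x^4 = |x|^4 := by rw [← abs_pow]; exact (abs_of_nonneg (by positivity)).symm
        _ ≤ 1 := pow_le_one₀ (abs_nonneg x) h
    nlinarith
  · have hy0 : (0:ℝ) ≤ η * |x| ^ (2 * r) := by positivity
    -- exp y ≥ y^k / k!
    have hexp : (η * |x| ^ (2 * r)) ^ k / (k.factorial : ℝ) ≤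
        Real.exp (η * |x| ^ (2 * r)) := by
      refine le_trans ?_ (Real.sum_le_exp_of_nonneg hy0 (k+1))
      refine Finset.single_le_sum (f := fun i => (η * |x| ^ (2 * r)) ^ i / (i.factorial : ℝ))
        (fun i _ => by positivity) (Finset.self_mem_range_succ k)
    -- x^4 ≤ |x| ^ (2 r k)
    have hpow : x^4 ≤ (|x| ^ (2 * r)) ^ k := by
      have h1 : (|x| ^ (2 * r)) ^ k = |x| ^ (2 * r * k) := by
        rw [← Real.rpow_natCast (|x| ^ (2 * r)) k, ← Real.rpow_mul (abs_nonneg x)]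
      have h2 : (4:ℝ) ≤ 2 * r * k := by
        have := (div_le_iff₀ hr).mp hkr
        nlinarith
      rw [h1]
      calc x^4 = |x| ^ ((4:ℕ):ℝ) := by
            rw [Real.rpow_natCast, ← abs_pow]; exact (abs_of_nonneg (by positivity)).symm
        _ ≤ |x| ^ (2 * r * k) := Real.rpow_le_rpow_of_exponent_le h.le (by push_cast; linarith)
    have hmul : (η * |x| ^ (2 * r)) ^ k = η ^ k * (|x| ^ (2 * r)) ^ k := mul_pow _ _ _
    have hfact : (0:ℝ) < (k.factorial : ℝ) := by positivity
    have hηk : (0:ℝ) < η ^ k := by positivity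
    rw [hmul] at hexp
    have : (|x| ^ (2 * r)) ^ k ≤ ((k.factorial : ℝ) / η ^ k) *
        Real.exp (η * |x| ^ (2 * r)) := by
      rw [div_mul_eq_mul_div, le_div_iff₀ hηk]
      rw [div_le_iff₀ hfact] at hexp
      nlinarith
    nlinarith

/-- Integrability of the fourth moment under a.s. boundedness. -/
lemma int4_of_bdd (hmeas : Measurable (X 0 0)) {K : ℝ} (hK : ∀ᵐ ω ∂μ, |X 0 0 ω| < K) :
    Integrable (fun ω => (X 0 0 ω)^4) μ := by
  refine (integrable_const ((max K 0)^4)).mono'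
    ((hmeas.pow_const 4)).aestronglyMeasurable ?_
  filter_upwards [hK] with ω hω
  rw [Real.norm_eq_abs, abs_of_nonneg (by positivity)]
  calc (X 0 0 ω)^4 = |X 0 0 ω|^4 := by rw [← abs_pow]; exact (abs_of_nonneg (by positivity)).symm
    _ ≤ (max K 0)^4 := pow_le_pow_left₀ (abs_nonneg _)
        (le_trans hω.le (le_max_left _ _)) 4

lemma logptilde_tendsto {p : ℕ → ℕ} (hp : Tendsto p atTop atTop) :
    Tendsto (fun n => Real.log (ptilde (p n))) atTop atTop := by
  have hlogp : Tendsto (fun n => Real.log (p n)) atTop atTop :=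
    Real.tendsto_log_atTop.comp (tendsto_natCast_atTop_atTop.comp hp)
  refine tendsto_atTop_mono' atTop ?_ hlogp
  filter_upwards [hp.eventually_ge_atTop 3] with n hn
  have h3 : (3:ℝ) ≤ (p n : ℝ) := by exact_mod_cast hn
  refine Real.log_le_log (by linarith) ?_
  rw [ptilde]
  nlinarith

lemma ptilde_facts {p : ℕ → ℕ} (hp : Tendsto p atTop atTop) :
    ∀ᶠ n : ℕ in atTop, 0 < ptilde (p n) ∧
      Real.log (ptilde (p n)) ≤ 2 * Real.log (p n) ∧ 0 ≤ Real.log (p n) := by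
  filter_upwards [hp.eventually_ge_atTop 2] with n hn
  have h2 : (2:ℝ) ≤ (p n : ℝ) := by exact_mod_cast hn
  have hpos : 0 < ptilde (p n) := by rw [ptilde]; nlinarith
  refine ⟨hpos, ?_, ?_⟩
  · have hle : ptilde (p n) ≤ (p n : ℝ)^2 := by rw [ptilde]; nlinarith
    calc Real.log (ptilde (p n)) ≤ Real.log ((p n : ℝ)^2) := Real.log_le_log hpos hle
      _ = 2 * Real.log (p n) := by rw [Real.log_pow]; push_cast; ring
  · exact Real.log_nonneg (by linarith)

lemma dn1_facts {p : ℕ → ℕ} (hp : Tendsto p atTop atTop) :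
    Tendsto (fun n => dn1 (p n)) atTop atTop ∧
    ∀ᶠ n : ℕ in atTop, dn1 (p n) ≤ 2 * Real.sqrt (max (Real.log (p n)) (n:ℝ)) := by
  have hL := logptilde_tendsto hp
  set L : ℕ → ℝ := fun n => Real.log (ptilde (p n)) with hLdef
  have hup : ∀ᶠ n : ℕ in atTop, dn1 (p n) ≤ Real.sqrt (2 * L n) := by
    filter_upwards [hL.eventually_ge_atTop 1] with n hn
    have hlogL : 0 ≤ Real.log (L n) := Real.log_nonneg hn
    have h4π : 0 ≤ Real.log (4 * Real.pi) :=
      Real.log_nonneg (by nlinarith [Real.pi_gt_three])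
    have : 0 ≤ (Real.log (L n) + Real.log (4 * Real.pi)) / (2 * Real.sqrt (2 * L n)) := by
      positivity
    rw [dn1]
    linarith
  constructor
  · have hlow : ∀ᶠ n : ℕ in atTop, Real.sqrt (2 * L n) / 2 ≤ dn1 (p n) := by
      filter_upwards [hL.eventually_ge_atTop (max 1 (Real.log (4 * Real.pi)))] with n hn
      have hn1 : (1:ℝ) ≤ L n := le_trans (le_max_left _ _) hn
      have hnπ : Real.log (4 * Real.pi) ≤ L n := le_trans (le_max_right _ _) hn
      have hL0 : (0:ℝ) < L n := by linarith
      have hnum : Real.log (L n) + Real.log (4 * Real.pi) ≤ 2 * L n := by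
        have := Real.log_le_self (le_of_lt hL0)
        linarith
      have hsq : Real.sqrt (2 * L n) ^ 2 = 2 * L n := Real.sq_sqrt (by linarith)
      have hs0 : 0 < Real.sqrt (2 * L n) := Real.sqrt_pos.2 (by linarith)
      have hdiv : (Real.log (L n) + Real.log (4 * Real.pi)) / (2 * Real.sqrt (2 * L n)) ≤
          (2 * L n) / (2 * Real.sqrt (2 * L n)) := by
        apply div_le_div_of_nonneg_right hnum (by positivity)
      have heq : (2 * L n) / (2 * Real.sqrt (2 * L n)) = Real.sqrt (2 * L n) / 2 := by
        rw [div_eq_div_iff (by positivity) (by norm_num)]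
        nlinarith
      rw [dn1]
      rw [heq] at hdiv
      linarith
    refine tendsto_atTop_mono' atTop hlow ?_
    have h2L : Tendsto (fun n => 2 * L n) atTop atTop := hL.const_mul_atTop (by norm_num)
    exact (sqrt_tendsto_atTop.comp h2L).atTop_div_const (by norm_num)
  · filter_upwards [hup, ptilde_facts hp, Filter.eventually_ge_atTop 0] with n h1 h2 _
    obtain ⟨hpos, hLle, hlog0⟩ := h2
    have hmax : Real.log (p n) ≤ max (Real.log (p n)) (n:ℝ) := le_max_left _ _
    have h2L4 : 2 * L n ≤ 4 * max (Real.log (p n)) (n:ℝ) := by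
      simp only [hLdef]; linarith
    calc dn1 (p n) ≤ Real.sqrt (2 * L n) := h1
      _ ≤ Real.sqrt (4 * max (Real.log (p n)) (n:ℝ)) := Real.sqrt_le_sqrt h2L4
      _ = 2 * Real.sqrt (max (Real.log (p n)) (n:ℝ)) := by
          rw [show (4:ℝ) * max (Real.log (p n)) (n:ℝ) = 2^2 * max (Real.log (p n)) (n:ℝ) by
            norm_num, Real.sqrt_mul (by positivity), Real.sqrt_sq (by norm_num)]

lemma dn1_facts' {p : ℕ → ℕ} (hp : Tendsto p atTop atTop) :
    ∀ᶠ n : ℕ in atTop, dn1 (p n) ≤ 3 * Real.sqrt (max (Real.log (p n)) (n:ℝ)) := by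
  filter_upwards [(dn1_facts hp).2] with n hn
  nlinarith [Real.sqrt_nonneg (max (Real.log (p n)) (n:ℝ)), hn]

lemma corr_tendsto_zero {p : ℕ → ℕ} (hp : Tendsto p atTop atTop) {r : ℝ} (hr : 0 < r)
    (hr2 : r ≤ 2/3)
    (ho : (fun n => Real.log (p n)) =o[atTop] fun n => (n:ℝ)^(r/(2-r))) (κ : ℝ) :
    Tendsto (fun n => κ * Real.log (ptilde (p n)) / (3 * Real.sqrt (n:ℝ))) atTop (𝓝 0) := by
  have hO : (fun n : ℕ => (n:ℝ)^(r/(2-r))) =O[atTop] fun n => (n:ℝ)^((1:ℝ)/2) := by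
    refine Asymptotics.IsBigO.of_bound 1 ?_
    filter_upwards [Filter.eventually_ge_atTop 1] with n hn
    have hn1 : (1:ℝ) ≤ (n:ℝ) := by exact_mod_cast hn
    have hexp : r/(2-r) ≤ (1:ℝ)/2 := by
      rw [div_le_div_iff₀ (by linarith) (by norm_num)]
      linarith
    rw [one_mul, Real.norm_eq_abs, Real.norm_eq_abs,
      abs_of_nonneg (Real.rpow_nonneg (by linarith) _),
      abs_of_nonneg (Real.rpow_nonneg (by linarith) _)]
    exact Real.rpow_le_rpow_of_exponent_le hn1 hexp
  have hdiv : Tendsto (fun n : ℕ => Real.log (p n) / (n:ℝ)^((1:ℝ)/2)) atTop (𝓝 0) :=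
    (ho.trans_isBigO hO).tendsto_div_nhds_zero
  have hg : Tendsto (fun n : ℕ => |κ| * (Real.log (p n) / (n:ℝ)^((1:ℝ)/2))) atTop (𝓝 0) := by
    have := hdiv.const_mul |κ|
    simpa using this
  refine squeeze_zero_norm' ?_ hg
  filter_upwards [ptilde_facts hp, Filter.eventually_ge_atTop 1, hp.eventually_ge_atTop 2]
    with n hpt hn1 hp2
  obtain ⟨hpos, hLle, hlog0⟩ := hpt
  have hn1' : (1:ℝ) ≤ (n:ℝ) := by exact_mod_cast hn1
  have hL0 : 0 ≤ Real.log (ptilde (p n)) := by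
    refine Real.log_nonneg ?_
    have h2 : (2:ℝ) ≤ (p n : ℝ) := by exact_mod_cast hp2
    rw [ptilde]; nlinarith
  have hsq : Real.sqrt (n:ℝ) = (n:ℝ)^((1:ℝ)/2) := Real.sqrt_eq_rpow _
  have hsq0 : (1:ℝ) ≤ (n:ℝ)^((1:ℝ)/2) := Real.one_le_rpow hn1' (by norm_num)
  rw [Real.norm_eq_abs, abs_div, abs_mul, abs_of_nonneg hL0, abs_of_nonneg (by positivity :
    (0:ℝ) ≤ 3 * Real.sqrt (n:ℝ)), hsq]
  rw [div_le_iff₀ (by positivity)]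
  have hstep : Real.log (ptilde (p n)) * |κ| ≤ 2 * Real.log (p n) * |κ| := by
    apply mul_le_mul_of_nonneg_right hLle (abs_nonneg κ)
  have hq0 : 0 ≤ Real.log (p n) / (n:ℝ)^((1:ℝ)/2) := by positivity
  have hqeq : Real.log (p n) / (n:ℝ)^((1:ℝ)/2) * (n:ℝ)^((1:ℝ)/2) = Real.log (p n) := by
    field_simp
  have hu0 : (0:ℝ) < (n:ℝ)^((1:ℝ)/2) := by positivity
  have hrhs : |κ| * (Real.log (p n) / (n:ℝ)^((1:ℝ)/2)) * (3 * (n:ℝ)^((1:ℝ)/2)) =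
      3 * (|κ| * Real.log (p n)) := by
    field_simp
  rw [hrhs]
  nlinarith [mul_le_mul_of_nonneg_left hLle (abs_nonneg κ), mul_nonneg (abs_nonneg κ) hlog0]


lemma dny_facts {p : ℕ → ℕ} (hp : Tendsto p atTop atTop) (κ : ℝ)
    (hcorr : Tendsto (fun n => κ * Real.log (ptilde (p n)) / (3 * Real.sqrt (n:ℝ)))
      atTop (𝓝 0)) :
    Tendsto (fun n => dny (p n) n κ) atTop atTop ∧
    ∀ᶠ n : ℕ in atTop, dny (p n) n κ ≤ 3 * Real.sqrt (max (Real.log (p n)) (n:ℝ)) := by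
  have hd := dn1_facts hp
  have hsmall : ∀ᶠ n : ℕ in atTop,
      ‖κ * Real.log (ptilde (p n)) / (3 * Real.sqrt (n:ℝ))‖ < 1 :=
    (NormedAddCommGroup.tendsto_nhds_zero.mp hcorr) 1 one_pos
  constructor
  · refine tendsto_atTop_mono' atTop ?_ (tendsto_atTop_add_const_right atTop (-1) hd.1)
    filter_upwards [hsmall] with n hn
    rw [Real.norm_eq_abs] at hn
    have := le_abs_self (κ * Real.log (ptilde (p n)) / (3 * Real.sqrt (n:ℝ)))
    rw [dny]
    linarith
  · filter_upwards [hsmall, hd.2, Filter.eventually_ge_atTop 1] with n hn hle hn1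
    rw [Real.norm_eq_abs] at hn
    have h1 := neg_abs_le (κ * Real.log (ptilde (p n)) / (3 * Real.sqrt (n:ℝ)))
    have hn1' : (1:ℝ) ≤ (n:ℝ) := by exact_mod_cast hn1
    have hsq1 : (1:ℝ) ≤ Real.sqrt (max (Real.log (p n)) (n:ℝ)) := by
      rw [show (1:ℝ) = Real.sqrt 1 by simp]
      exact Real.sqrt_le_sqrt (le_trans hn1' (le_max_right _ _))
    rw [dny]
    linarith

theorem mean_test_power'
    (μ : Measure Ω) [IsProbabilityMeasure μ]
    (X : ℕ → ℕ → Ω → ℝ)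
    (hstd : StdConditions μ X)
    (μvec : ℕ → ℕ → ℕ → ℝ)
    (p : ℕ → ℕ) (hp : Tendsto p atTop atTop)
    (istar jstar : ℕ → ℕ)
    (hlt : ∀ n, istar n < jstar n ∧ jstar n < p n)
    (hsep : Tendsto (fun n =>
        (∑ l ∈ Finset.range n, (μvec n (istar n) l - μvec n (jstar n) l) ^ 2) /
          Real.sqrt ((n : ℝ) * max (Real.log (p n)) (n : ℝ)))
      atTop atTop) :
    (∀ s : ℝ, CondB1 μ X p s → TestPowerOne μ X μvec p (fun n => dn1 (p n))) ∧
    (∀ η r : ℝ, CondB2 μ X p η r →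
      TestPowerOne μ X μvec p (fun n =>
        if 1 / 2 < r then dny (p n) n (kappaTilde μ X) else dn1 (p n))) ∧
    (∀ η r : ℝ, CondB3 μ X p η r → TestPowerOne μ X μvec p (fun n => dn1 (p n))) ∧
    (∀ K : ℝ, CondB4 μ X p K → TestPowerOne μ X μvec p (fun n => dn1 (p n))) := by
  refine ⟨?_, ?_, ?_, ?_⟩
  · rintro s ⟨hs, hint, hm4, -⟩
    exact master hstd (int4_of_B1 (hstd.meas 0 0) hs hint) hm4 μvec p istar jstar hlt hsep
      _ (dn1_facts hp).1 (dn1_facts' hp)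
  · rintro η r ⟨hη, hr, hr23, hint, hm4, ho⟩
    have hInt4 := int4_of_exp (hstd.meas 0 0) hη hr hint
    by_cases h : (1:ℝ)/2 < r
    · simp only [if_pos h]
      have hdf := dny_facts hp _ (corr_tendsto_zero hp hr hr23 ho (kappaTilde μ X))
      exact master hstd hInt4 (le_of_lt hm4) μvec p istar jstar hlt hsep _ hdf.1 hdf.2
    · simp only [if_neg h]
      exact master hstd hInt4 (le_of_lt hm4) μvec p istar jstar hlt hsep
        _ (dn1_facts hp).1 (dn1_facts' hp)
  · rintro η r ⟨hη, hr, hint, hm4, -⟩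
    exact master hstd (int4_of_exp (hstd.meas 0 0) hη (by linarith) hint) (le_of_eq hm4)
      μvec p istar jstar hlt hsep _ (dn1_facts hp).1 (dn1_facts' hp)
  · rintro K ⟨hK, hm4, -⟩
    exact master hstd (int4_of_bdd (hstd.meas 0 0) hK) (le_of_eq hm4)
      μvec p istar jstar hlt hsep _ (dn1_facts hp).1 (dn1_facts' hp)

/-- **Theorem 3.3, alternative hypothesis**: under the conditions of the interpoint-distance
theorem (one of (B1)–(B4) with the corresponding growth rate of `p`), if there exist index
sequences `1 ≤ i*_n < j*_n ≤ p` with `‖μ_{i*_n} - μ_{j*_n}‖₂²/√(n·max(log p, n)) → ∞`, then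
for any `α ∈ (0,1)` the rejection probability tends to `1`. -/
theorem mean_test_power
    (μ : Measure Ω) [IsProbabilityMeasure μ]
    (X : ℕ → ℕ → Ω → ℝ)
    (hstd : StdConditions μ X)
    (μvec : ℕ → ℕ → ℕ → ℝ)
    (p : ℕ → ℕ) (hp : Tendsto p atTop atTop)
    (istar jstar : ℕ → ℕ)
    (hlt : ∀ n, istar n < jstar n ∧ jstar n < p n)
    (hsep : Tendsto (fun n =>
        (∑ l ∈ Finset.range n, (μvec n (istar n) l - μvec n (jstar n) l) ^ 2) /
          Real.sqrt ((n : ℝ) * max (Real.log (p n)) (n : ℝ)))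
      atTop atTop) :
    (∀ s : ℝ, CondB1 μ X p s → TestPowerOne μ X μvec p (fun n => dn1 (p n))) ∧
    (∀ η r : ℝ, CondB2 μ X p η r →
      TestPowerOne μ X μvec p (fun n =>
        if 1 / 2 < r then dny (p n) n (kappaTilde μ X) else dn1 (p n))) ∧
    (∀ η r : ℝ, CondB3 μ X p η r → TestPowerOne μ X μvec p (fun n => dn1 (p n))) ∧
    (∀ K : ℝ, CondB4 μ X p K → TestPowerOne μ X μvec p (fun n => dn1 (p n))) := by
  exact mean_test_power' μ X hstd μvec p hp istar jstar hlt hsep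

end InterpointDist
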